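/- Let k ≥ 4 and let (n_1,…,n_k) be an admissible k-tuple of non-negative integers with [n_1,…,n_k] = 0, such that n_i ≤ 3 for every i, and such that whenever n_i = n_j = 3 either i = j with 3 < i < k−2, or |i−j| ≥ 3. Then (n_1,…,n_k) = (1,2,…,2,1), the k-tuple whose first and last entries equal 1 and whose remaining k−2 entries all equal 2. -/
import Mathlib


/-- The continued fraction `[n_1, …, n_k] = n_1 - 1/(n_2 - 1/(… - 1/n_k))`,
computed by the backwards recursion `t_k = n_k`, `t_i = n_i - 1/t_{i+1}`. -/
def cf : List ℚ → ℚ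
  | [] => 0
  | [a] => a
  | a :: b :: l => a - 1 / cf (b :: l)

/-- The continued fraction of a tuple of integers. -/
def cfI (l : List ℤ) : ℚ := cf (l.map (fun n => (n : ℚ)))

/-- A tuple is admissible if every denominator `t_i`, `i = 2, …, k`, appearing in the
backwards recursion computing the continued fraction is positive, i.e. the continued
fraction of every nonempty proper suffix is positive. -/
def Admissible (l : List ℤ) : Prop :=
  ∀ t : List ℤ, t ≠ [] → t ≠ l → t <:+ l → 0 < cfI t

lemma cfI_singleton (a : ℤ) : cfI [a] = a := by simp [cfI, cf]

lemma cfI_cons (a : ℤ) (m : List ℤ) (h : m ≠ []) :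
    cfI (a :: m) = a - 1 / cfI m := by
  cases m with
  | nil => exact absurd rfl h
  | cons b t => rfl

lemma adm_tail {a : ℤ} {m : List ℤ} (h : Admissible (a :: m)) : Admissible m := by
  intro s hs hsm hsuf
  refine h s hs ?_ (hsuf.trans (List.suffix_cons a m))
  intro he
  have h1 := hsuf.length_le
  rw [he] at h1
  simp at h1

lemma adm_head {a : ℤ} {m : List ℤ} (h : Admissible (a :: m)) (hm : m ≠ []) :
    0 < cfI m := by
  refine h m hm ?_ (List.suffix_cons a m)
  intro he
  apply_fun List.length at he
  simp at he

lemma inv_eq {a b : ℚ} (h : 1 / a = b) : a = 1 / b := by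
  rw [← h, one_div_one_div]

/-- The set of "dead" states `(t, g)`: `t` is the continued fraction of the remaining
suffix, `g` is (capped at 3) the number of entries since the last `3`.  From such a
state the recursion cannot be completed. -/
def Dead (t : ℚ) (g : ℕ) : Prop :=
  (g = 0 ∧ 2/5 ≤ t ∧ t ≤ 1/2) ∨
  (g = 1 ∧ 5/8 ≤ t ∧ t ≤ 2/3) ∨
  (g = 1 ∧ 5/3 ≤ t ∧ t ≤ 2) ∨
  (g = 2 ∧ 8/11 ≤ t ∧ t ≤ 3/4) ∨
  (g = 2 ∧ 8/3 ≤ t ∧ t ≤ 3) ∨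
  (g = 3 ∧ 8/11 ≤ t ∧ t < 1) ∨
  3 ≤ t

set_option maxHeartbeats 2000000 in
lemma dead : ∀ (m : List ℤ) (g : ℕ),
    (∀ x ∈ m, x ≤ 3) → Admissible m →
    (∀ i (hi : i < m.length), m[i]'hi = 3 → 2 ≤ i + g) →
    (∀ i j (hi : i < m.length) (hj : j < m.length),
        m[i]'hi = 3 → m[j]'hj = 3 → i < j → i + 3 ≤ j) →
    (∀ i (hi : i < m.length), m[i]'hi = 3 → i + 4 ≤ m.length) →
    (g < 3 → 3 ≤ g + m.length) →
    Dead (cfI m) g → False := by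
  intro m
  induction m with
  | nil =>
      intro g _ _ _ _ _ _ hD
      have h0 : cfI [] = 0 := by simp [cfI, cf]
      rw [h0] at hD
      rcases hD with ⟨_,h,_⟩|⟨_,h,_⟩|⟨_,h,_⟩|⟨_,h,_⟩|⟨_,h,_⟩|⟨_,h,_⟩|h <;> norm_num at h
  | cons n m' ih =>
      intro g hx hadm ha hb hc hr hD
      by_cases hm' : m' = []
      · -- base case : m = [n]
        subst hm'
        rw [cfI_singleton] at hD
        have hn3 : n ≤ 3 := hx n (by simp)
        rcases hD with ⟨hg,h1,h2⟩|⟨hg,h1,h2⟩|⟨hg,h1,h2⟩|⟨hg,h1,h2⟩|⟨hg,h1,h2⟩|⟨hg,h1,h2⟩|h1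
        · have d1 : (0:ℤ) < n := by exact_mod_cast show (0:ℚ) < (n:ℚ) by linarith
          have d2 : n < 1 := by exact_mod_cast show ((n:ℚ)) < 1 by linarith
          omega
        · have d1 : (0:ℤ) < n := by exact_mod_cast show (0:ℚ) < (n:ℚ) by linarith
          have d2 : n < 1 := by exact_mod_cast show ((n:ℚ)) < 1 by linarith
          omega
        · have h5 := hr (by omega)
          simp only [List.length_cons, List.length_nil] at h5
          omega
        · have d1 : (0:ℤ) < n := by exact_mod_cast show (0:ℚ) < (n:ℚ) by linarith
          have d2 : n < 1 := by exact_mod_cast show ((n:ℚ)) < 1 by linarith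
          omega
        · have d1 : (2:ℤ) < n := by exact_mod_cast show (2:ℚ) < (n:ℚ) by linarith
          have hn : n = 3 := by omega
          have := hc 0 (by simp) (by simp [hn])
          simp only [List.length_cons, List.length_nil] at this
          omega
        · have d1 : (0:ℤ) < n := by exact_mod_cast show (0:ℚ) < (n:ℚ) by linarith
          have d2 : n < 1 := by exact_mod_cast show ((n:ℚ)) < 1 by linarith
          omega
        · have d1 : (3:ℤ) ≤ n := by exact_mod_cast show (3:ℚ) ≤ (n:ℚ) by linarith
          have hn : n = 3 := by omega
          have := hc 0 (by simp) (by simp [hn])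
          simp only [List.length_cons, List.length_nil] at this
          omega
      · -- inductive step
        have ht' : 0 < cfI m' := adm_head hadm hm'
        set s := cfI m' with hs
        set T := cfI (n :: m') with hT
        have heq : T = (n:ℚ) - 1 / s := by rw [hT, hs]; exact cfI_cons n m' hm'
        clear_value s T
        have hsne : s ≠ 0 := ne_of_gt ht'
        have key : s * ((n:ℚ) - T) = 1 := by
          rw [heq, sub_sub_cancel]
          field_simp
        have hlt : T < (n:ℚ) := by
          rw [heq]
          have h0 : 0 < 1 / s := one_div_pos.mpr ht'
          linarith
        have ht25 : (2:ℚ)/5 ≤ T := by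
          rcases hD with ⟨_,h,_⟩|⟨_,h,_⟩|⟨_,h,_⟩|⟨_,h,_⟩|⟨_,h,_⟩|⟨_,h,_⟩|h <;> linarith
        have hn3 : n ≤ 3 := hx n (by simp)
        have hn1 : 1 ≤ n := by
          have h0 : (0:ℤ) < n := by exact_mod_cast show (0:ℚ) < (n:ℚ) by linarith
          omega
        have hng : n = 3 → 2 ≤ g := by
          intro h
          have := ha 0 (by simp) (by simp [h])
          omega
        have hx' : ∀ x ∈ m', x ≤ 3 := fun x hxm => hx x (by simp [hxm])
        have hadm' : Admissible m' := adm_tail hadm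
        have hb' : ∀ i j (hi : i < m'.length) (hj : j < m'.length),
            m'[i]'hi = 3 → m'[j]'hj = 3 → i < j → i + 3 ≤ j := by
          intro i j hi hj h3i h3j hij
          have := hb (i+1) (j+1) (by simp only [List.length_cons]; omega)
            (by simp only [List.length_cons]; omega)
            (by simpa using h3i) (by simpa using h3j) (by omega)
          omega
        have hc' : ∀ i (hi : i < m'.length), m'[i]'hi = 3 → i + 4 ≤ m'.length := by
          intro i hi h3i
          have := hc (i+1) (by simp only [List.length_cons]; omega) (by simpa using h3i)
          simp only [List.length_cons] at this
          omega
        have ihm : ∀ g', (∀ i (hi : i < m'.length), m'[i]'hi = 3 → 2 ≤ i + g') →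
            (g' < 3 → 3 ≤ g' + m'.length) → Dead s g' → False :=
          fun g' ha' hr' hD' => ih g' hx' hadm' ha' hb' hc' hr' hD'
        have haS : ∀ i (hi : i < m'.length), m'[i]'hi = 3 → 2 ≤ i + 1 + g := by
          intro i hi h3i
          have := ha (i+1) (by simp only [List.length_cons]; omega) (by simpa using h3i)
          omega
        have hr2 : g < 3 → 3 ≤ g + (m'.length + 1) := by
          intro h
          have := hr h
          simp only [List.length_cons] at this
          omega
        have hlen3 : n = 3 → 3 ≤ m'.length := by
          intro h
          have := hc 0 (by simp) (by simp [h])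
          simp only [List.length_cons] at this
          omega
        interval_cases n
        · -- n = 1
          push_cast at key hlt
          rcases hD with ⟨hg,h1,h2⟩|⟨hg,h1,h2⟩|⟨hg,h1,h2⟩|⟨hg,h1,h2⟩|⟨hg,h1,h2⟩|⟨hg,h1,h2⟩|h1
          · subst hg
            refine ihm 1 (fun i hi h3i => by have := haS i hi h3i; omega)
              (fun _ => by have := hr2 (by omega); omega) ?_
            exact Or.inr (Or.inr (Or.inl ⟨rfl,
              by nlinarith [key, mul_nonneg (sub_nonneg.2 h1) ht'.le,
                mul_nonneg (sub_nonneg.2 h2) ht'.le],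
              by nlinarith [key, mul_nonneg (sub_nonneg.2 h1) ht'.le,
                mul_nonneg (sub_nonneg.2 h2) ht'.le]⟩))
          · subst hg
            refine ihm 2 (fun i hi h3i => by have := haS i hi h3i; omega)
              (fun _ => by have := hr2 (by omega); omega) ?_
            exact Or.inr (Or.inr (Or.inr (Or.inr (Or.inl ⟨rfl,
              by nlinarith [key, mul_nonneg (sub_nonneg.2 h1) ht'.le,
                mul_nonneg (sub_nonneg.2 h2) ht'.le],
              by nlinarith [key, mul_nonneg (sub_nonneg.2 h1) ht'.le,
                mul_nonneg (sub_nonneg.2 h2) ht'.le]⟩))))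
          · linarith
          · subst hg
            refine ihm 3 (fun i hi h3i => by omega) (fun h => by omega) ?_
            exact Or.inr (Or.inr (Or.inr (Or.inr (Or.inr (Or.inr
              (by nlinarith [key, mul_nonneg (sub_nonneg.2 h1) ht'.le]))))))
          · linarith
          · subst hg
            refine ihm 3 (fun i hi h3i => by omega) (fun h => by omega) ?_
            exact Or.inr (Or.inr (Or.inr (Or.inr (Or.inr (Or.inr
              (by nlinarith [key, mul_nonneg (sub_nonneg.2 h1) ht'.le]))))))
          · linarith
        · -- n = 2
          push_cast at key hlt
          rcases hD with ⟨hg,h1,h2⟩|⟨hg,h1,h2⟩|⟨hg,h1,h2⟩|⟨hg,h1,h2⟩|⟨hg,h1,h2⟩|⟨hg,h1,h2⟩|h1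
          · subst hg
            refine ihm 1 (fun i hi h3i => by have := haS i hi h3i; omega)
              (fun _ => by have := hr2 (by omega); omega) ?_
            exact Or.inr (Or.inl ⟨rfl,
              by nlinarith [key, mul_nonneg (sub_nonneg.2 h1) ht'.le,
                mul_nonneg (sub_nonneg.2 h2) ht'.le],
              by nlinarith [key, mul_nonneg (sub_nonneg.2 h1) ht'.le,
                mul_nonneg (sub_nonneg.2 h2) ht'.le]⟩)
          · subst hg
            refine ihm 2 (fun i hi h3i => by have := haS i hi h3i; omega)
              (fun _ => by have := hr2 (by omega); omega) ?_
            exact Or.inr (Or.inr (Or.inr (Or.inl ⟨rfl,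
              by nlinarith [key, mul_nonneg (sub_nonneg.2 h1) ht'.le,
                mul_nonneg (sub_nonneg.2 h2) ht'.le],
              by nlinarith [key, mul_nonneg (sub_nonneg.2 h1) ht'.le,
                mul_nonneg (sub_nonneg.2 h2) ht'.le]⟩)))
          · subst hg
            refine ihm 2 (fun i hi h3i => by have := haS i hi h3i; omega)
              (fun _ => by have := hr2 (by omega); omega) ?_
            exact Or.inr (Or.inr (Or.inr (Or.inr (Or.inr (Or.inr
              (by nlinarith [key, mul_nonneg (sub_nonneg.2 h1) ht'.le]))))))
          · subst hg
            refine ihm 3 (fun i hi h3i => by omega) (fun h => by omega) ?_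
            exact Or.inr (Or.inr (Or.inr (Or.inr (Or.inr (Or.inl ⟨rfl,
              by nlinarith [key, mul_nonneg (sub_nonneg.2 h1) ht'.le,
                mul_nonneg (sub_nonneg.2 h2) ht'.le],
              by nlinarith [key, mul_nonneg (sub_nonneg.2 h1) ht'.le,
                mul_nonneg (sub_nonneg.2 h2) ht'.le]⟩)))))
          · linarith
          · subst hg
            refine ihm 3 (fun i hi h3i => by omega) (fun h => by omega) ?_
            refine Or.inr (Or.inr (Or.inr (Or.inr (Or.inr (Or.inl ⟨rfl,
              by nlinarith [key, mul_nonneg (sub_nonneg.2 h1) ht'.le], ?_⟩)))))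
            nlinarith [key, mul_pos ht' (show (0:ℚ) < 1 - T by linarith)]
          · linarith
        · -- n = 3
          push_cast at key hlt
          have hg2 : 2 ≤ g := hng rfl
          have ha0 : ∀ i (hi : i < m'.length), m'[i]'hi = 3 → 2 ≤ i + 0 := by
            intro i hi h3i
            have := hb 0 (i+1) (by simp) (by simp only [List.length_cons]; omega)
              (by simp) (by simpa using h3i) (by omega)
            omega
          have hr0 : (0:ℕ) < 3 → 3 ≤ 0 + m'.length := fun _ => by
            have := hlen3 rfl; omega
          rcases hD with ⟨hg,h1,h2⟩|⟨hg,h1,h2⟩|⟨hg,h1,h2⟩|⟨hg,h1,h2⟩|⟨hg,h1,h2⟩|⟨hg,h1,h2⟩|h1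
          · omega
          · omega
          · omega
          · refine ihm 0 ha0 hr0 (Or.inl ⟨rfl, ?_, ?_⟩)
            · nlinarith [key, mul_nonneg (sub_nonneg.2 h1) ht'.le,
                mul_nonneg (sub_nonneg.2 h2) ht'.le]
            · nlinarith [key, mul_nonneg (sub_nonneg.2 h1) ht'.le,
                mul_nonneg (sub_nonneg.2 h2) ht'.le]
          · refine ihm 0 ha0 hr0 (Or.inr (Or.inr (Or.inr (Or.inr (Or.inr (Or.inr ?_))))))
            nlinarith [key, mul_nonneg (sub_nonneg.2 h1) ht'.le]
          · refine ihm 0 ha0 hr0 (Or.inl ⟨rfl, ?_, ?_⟩)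
            · nlinarith [key, mul_nonneg (sub_nonneg.2 h1) ht'.le]
            · nlinarith [key, mul_pos ht' (show (0:ℚ) < 1 - T by linarith)]
          · linarith

set_option maxHeartbeats 1000000 in
lemma good : ∀ (m : List ℤ),
    m ≠ [] → (∀ x ∈ m, x ≤ 3) → Admissible m →
    (∀ i j (hi : i < m.length) (hj : j < m.length),
        m[i]'hi = 3 → m[j]'hj = 3 → i < j → i + 3 ≤ j) →
    (∀ i (hi : i < m.length), m[i]'hi = 3 → i + 4 ≤ m.length) →
    cfI m = 1 → m = List.replicate (m.length - 1) 2 ++ [1] := by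
  intro m
  induction m with
  | nil => intro h; exact absurd rfl h
  | cons n m' ih =>
      intro _ hx hadm hb hc hcf
      by_cases hm' : m' = []
      · subst hm'
        rw [cfI_singleton] at hcf
        have hn : n = 1 := by exact_mod_cast hcf
        subst hn
        simp
      · have ht' : 0 < cfI m' := adm_head hadm hm'
        have hsne : cfI m' ≠ 0 := ne_of_gt ht'
        have heq : cfI (n :: m') = (n:ℚ) - 1 / cfI m' := cfI_cons n m' hm'
        rw [heq] at hcf
        have hpos : (0:ℚ) < 1 / cfI m' := one_div_pos.mpr ht'
        have hn2 : 2 ≤ n := by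
          have : (1:ℤ) < n := by exact_mod_cast show (1:ℚ) < (n:ℚ) by linarith
          omega
        have hn3 : n ≤ 3 := hx n (by simp)
        have hx' : ∀ x ∈ m', x ≤ 3 := fun x hxm => hx x (by simp [hxm])
        have hb' : ∀ i j (hi : i < m'.length) (hj : j < m'.length),
            m'[i]'hi = 3 → m'[j]'hj = 3 → i < j → i + 3 ≤ j := by
          intro i j hi hj h3i h3j hij
          have := hb (i+1) (j+1) (by simp only [List.length_cons]; omega)
            (by simp only [List.length_cons]; omega)
            (by simpa using h3i) (by simpa using h3j) (by omega)
          omega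
        have hc' : ∀ i (hi : i < m'.length), m'[i]'hi = 3 → i + 4 ≤ m'.length := by
          intro i hi h3i
          have := hc (i+1) (by simp only [List.length_cons]; omega) (by simpa using h3i)
          simp only [List.length_cons] at this
          omega
        interval_cases n
        · -- n = 2 : continue down the good path
          have h' : 1 / cfI m' = 1 := by push_cast at hcf; linarith
          have hv := inv_eq h'
          norm_num at hv
          have hrec := ih hm' hx' (adm_tail hadm) hb' hc' hv
          simp only [List.length_cons]
          rw [show m'.length + 1 - 1 = (m'.length - 1) + 1 from by
            have := List.length_pos_iff.2 hm'; omega]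
          rw [List.replicate_succ]
          simp only [List.cons_append]
          exact congrArg (List.cons 2) hrec
        · -- n = 3 : leads to a dead state
          exfalso
          have h' : 1 / cfI m' = 2 := by push_cast at hcf; linarith
          have hv := inv_eq h'
          have ha' : ∀ i (hi : i < m'.length), m'[i]'hi = 3 → 2 ≤ i + 0 := by
            intro i hi h3i
            have := hb 0 (i+1) (by simp) (by simp only [List.length_cons]; omega)
              (by simp) (by simpa using h3i) (by omega)
            omega
          have hr' : (0:ℕ) < 3 → 3 ≤ 0 + m'.length := by
            intro _
            have := hc 0 (by simp) (by simp)
            simp only [List.length_cons] at this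
            omega
          exact dead m' 0 hx' (adm_tail hadm) ha' hb' hc' hr'
            (by rw [hv]; exact Or.inl ⟨rfl, by norm_num, by norm_num⟩)

set_option maxHeartbeats 1000000 in
/-- Let `k ≥ 4` and let `(n_1, …, n_k)` be an admissible `k`-tuple of non-negative
integers with `[n_1, …, n_k] = 0`, with all entries `≤ 3`, and such that whenever
`n_i = n_j = 3` either `i = j` with `3 < i < k - 2` (one-based indexing), or
`|i - j| ≥ 3`.  Then `(n_1, …, n_k) = (1, 2, …, 2, 1)`. -/
theorem stmt5 (l : List ℤ) (hk : 4 ≤ l.length)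
    (hnn : ∀ x ∈ l, 0 ≤ x) (hadm : Admissible l) (hcf : cfI l = 0)
    (h3 : ∀ x ∈ l, x ≤ 3)
    (hsep : ∀ i j : Fin l.length, l.get i = 3 → l.get j = 3 →
      (i = j ∧ 3 < (i : ℕ) + 1 ∧ (i : ℕ) + 3 < l.length) ∨
        3 ≤ |((i : ℕ) : ℤ) - ((j : ℕ) : ℤ)|) :
    l = 1 :: (List.replicate (l.length - 2) 2 ++ [1]) := by
  have spair : ∀ i j (hi : i < l.length) (hj : j < l.length),
      l[i]'hi = 3 → l[j]'hj = 3 → i < j → i + 3 ≤ j := by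
    intro i j hi hj h3i h3j hij
    rcases hsep ⟨i, hi⟩ ⟨j, hj⟩ (by simpa [List.get_eq_getElem] using h3i)
        (by simpa [List.get_eq_getElem] using h3j) with ⟨he, _, _⟩ | habs
    · have : i = j := by simpa using he
      omega
    · simp only [Fin.val_mk] at habs
      have hij' : (i:ℤ) < j := by exact_mod_cast hij
      rw [abs_of_nonpos (by linarith)] at habs
      omega
  have sroom : ∀ i (hi : i < l.length), l[i]'hi = 3 → 4 ≤ i + 1 ∧ i + 4 ≤ l.length := by
    intro i hi h3i
    rcases hsep ⟨i, hi⟩ ⟨i, hi⟩ (by simpa [List.get_eq_getElem] using h3i)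
        (by simpa [List.get_eq_getElem] using h3i) with ⟨_, h1, h2⟩ | habs
    · simp only [Fin.val_mk] at h1 h2
      exact ⟨by omega, by omega⟩
    · norm_num at habs
  obtain ⟨n1, m, rfl⟩ : ∃ a t, l = a :: t := by
    cases l with
    | nil => simp at hk
    | cons a t => exact ⟨a, t, rfl⟩
  have hm : m ≠ [] := by
    intro h
    subst h
    simp at hk
  have ht2 : 0 < cfI m := adm_head hadm hm
  rw [cfI_cons _ _ hm] at hcf
  have hpos2 : (0:ℚ) < 1 / cfI m := one_div_pos.mpr ht2
  have hn1a : 0 ≤ n1 := hnn _ (by simp)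
  have hn1b : n1 ≤ 3 := h3 _ (by simp)
  interval_cases n1
  · -- n1 = 0
    exfalso
    push_cast at hcf
    linarith
  · -- n1 = 1 : good path
    have h' : 1 / cfI m = 1 := by push_cast at hcf; linarith
    have hv := inv_eq h'
    norm_num at hv
    have hb1 : ∀ i j (hi : i < m.length) (hj : j < m.length),
        m[i]'hi = 3 → m[j]'hj = 3 → i < j → i + 3 ≤ j := by
      intro i j hi hj h3i h3j hij
      have := spair (i+1) (j+1) (by simp only [List.length_cons]; omega)
        (by simp only [List.length_cons]; omega)
        (by simpa using h3i) (by simpa using h3j) (by omega)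
      omega
    have hc1 : ∀ i (hi : i < m.length), m[i]'hi = 3 → i + 4 ≤ m.length := by
      intro i hi h3i
      have := (sroom (i+1) (by simp only [List.length_cons]; omega) (by simpa using h3i)).2
      simp only [List.length_cons] at this
      omega
    have hrec := good m hm (fun x hxm => h3 x (by simp [hxm])) (adm_tail hadm) hb1 hc1 hv
    simp only [List.length_cons]
    rw [show m.length + 1 - 2 = m.length - 1 from by omega]
    exact congrArg (List.cons 1) hrec
  · -- n1 = 2 : branch A
    exfalso
    have h' : 1 / cfI m = 2 := by push_cast at hcf; linarith
    have hv := inv_eq h'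
    obtain ⟨n2, m2, rfl⟩ := List.exists_cons_of_ne_nil hm
    have hm2 : m2 ≠ [] := by
      intro h
      subst h
      simp at hk
    have ht3 : 0 < cfI m2 := adm_head (adm_tail hadm) hm2
    have hpos3 : (0:ℚ) < 1 / cfI m2 := one_div_pos.mpr ht3
    rw [cfI_cons _ _ hm2] at hv
    have hn2a : 0 ≤ n2 := hnn _ (by simp)
    have hn2b : n2 ≤ 3 := h3 _ (by simp)
    interval_cases n2
    · -- n2 = 0
      push_cast at hv
      linarith
    · -- n2 = 1
      have h'' : 1 / cfI m2 = 1/2 := by push_cast at hv; linarith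
      have hv2 := inv_eq h''
      norm_num at hv2
      obtain ⟨n3, m3, rfl⟩ := List.exists_cons_of_ne_nil hm2
      have hm3 : m3 ≠ [] := by
        intro h
        subst h
        simp at hk
      have ht4 : 0 < cfI m3 := adm_head (adm_tail (adm_tail hadm)) hm3
      have hpos4 : (0:ℚ) < 1 / cfI m3 := one_div_pos.mpr ht4
      rw [cfI_cons _ _ hm3] at hv2
      have hn3b : n3 ≤ 3 := h3 _ (by simp)
      have hge : (2:ℚ) < (n3:ℚ) := by linarith
      have hn3' : n3 = 3 := by
        have : (2:ℤ) < n3 := by exact_mod_cast hge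
        omega
      have := (sroom 2 (by simp only [List.length_cons]; omega) (by simp [hn3'])).1
      omega
    · -- n2 = 2
      have h'' : 1 / cfI m2 = 3/2 := by push_cast at hv; linarith
      have hv2 := inv_eq h''
      norm_num at hv2
      obtain ⟨n3, m3, rfl⟩ := List.exists_cons_of_ne_nil hm2
      have hm3 : m3 ≠ [] := by
        intro h
        subst h
        simp at hk
      have ht4 : 0 < cfI m3 := adm_head (adm_tail (adm_tail hadm)) hm3
      have hpos4 : (0:ℚ) < 1 / cfI m3 := one_div_pos.mpr ht4
      rw [cfI_cons _ _ hm3] at hv2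
      have hn3a : 0 ≤ n3 := hnn _ (by simp)
      have hn3b : n3 ≤ 3 := h3 _ (by simp)
      have hx3 : ∀ x ∈ m3, x ≤ 3 := fun x hxm => h3 x (by simp [hxm])
      have hadm3 : Admissible m3 := adm_tail (adm_tail (adm_tail hadm))
      have hb3 : ∀ i j (hi : i < m3.length) (hj : j < m3.length),
          m3[i]'hi = 3 → m3[j]'hj = 3 → i < j → i + 3 ≤ j := by
        intro i j hi hj h3i h3j hij
        have := spair (i+3) (j+3) (by simp only [List.length_cons]; omega)
          (by simp only [List.length_cons]; omega)
          (by simpa using h3i) (by simpa using h3j) (by omega)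
        omega
      have hc3 : ∀ i (hi : i < m3.length), m3[i]'hi = 3 → i + 4 ≤ m3.length := by
        intro i hi h3i
        have := (sroom (i+3) (by simp only [List.length_cons]; omega)
          (by simpa using h3i)).2
        simp only [List.length_cons] at this
        omega
      interval_cases n3
      · -- n3 = 0
        push_cast at hv2
        linarith
      · -- n3 = 1 : t4 = 3, dead
        have h''' : 1 / cfI m3 = 1/3 := by push_cast at hv2; linarith
        have hv3 := inv_eq h'''
        norm_num at hv3
        exact dead m3 3 hx3 hadm3 (fun i hi h3i => by omega) hb3 hc3 (fun h => by omega)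
          (by rw [hv3]
              exact Or.inr (Or.inr (Or.inr (Or.inr (Or.inr (Or.inr (by norm_num)))))))
      · -- n3 = 2 : t4 = 3/4, dead
        have h''' : 1 / cfI m3 = 4/3 := by push_cast at hv2; linarith
        have hv3 := inv_eq h'''
        norm_num at hv3
        exact dead m3 3 hx3 hadm3 (fun i hi h3i => by omega) hb3 hc3 (fun h => by omega)
          (by rw [hv3]
              exact Or.inr (Or.inr (Or.inr (Or.inr (Or.inr (Or.inl
                ⟨rfl, by norm_num, by norm_num⟩))))))
      · -- n3 = 3 : excluded by position
        have := (sroom 2 (by simp only [List.length_cons]; omega) (by simp)).1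
        omega
    · -- n2 = 3 : excluded by position
      have := (sroom 1 (by simp only [List.length_cons]; omega) (by simp)).1
      omega
  · -- n1 = 3 : excluded by position
    exfalso
    have := (sroom 0 (by simp only [List.length_cons]; omega) (by simp)).1
    omega
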